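/- For j = 1, …, K let M_j = Σ_{k=1}^j d_k (σ_rk² − (τ̂_rk − τ_k)(τ̂_rk − τ̂_ok)). Then E[ max_{1 ≤ j ≤ K} M_j² ] ≤ 4 Σ_{k=1}^K d_k² (σ_rk² ξ_k² + σ_rk² σ_ok² + 2 σ_rk⁴). -/

import Mathlib

open MeasureTheory ProbabilityTheory Real
open scoped NNReal ENNReal

lemma integrable_pow_mul_gexp {b : ℝ} (hb : 0 < b) (n : ℕ) :
    Integrable (fun x : ℝ => x ^ n * Real.exp (-b * x ^ 2)) := by
  have := integrable_rpow_mul_exp_neg_mul_sq hb (s := (n : ℝ)) (by exact lt_of_lt_of_le (by norm_num) (Nat.cast_nonneg n))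
  simpa [Real.rpow_natCast] using this

lemma deriv_gexp (b : ℝ) (x : ℝ) :
    HasDerivAt (fun x : ℝ => Real.exp (-b * x ^ 2))
      (Real.exp (-b * x ^ 2) * (-b * (2 * x))) x := by
  have h1 : HasDerivAt (fun x : ℝ => -b * x ^ 2) (-b * (2 * x)) x := by
    simpa using (hasDerivAt_pow 2 x).const_mul (-b)
  simpa [mul_comm] using h1.exp

lemma gauss_moment_rec {b : ℝ} (hb : 0 < b) (m : ℕ) :
    ∫ x : ℝ, x ^ (m + 2) * Real.exp (-b * x ^ 2)
      = ((m + 1 : ℝ) / (2 * b)) * ∫ x : ℝ, x ^ m * Real.exp (-b * x ^ 2) := by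
  have hderiv : ∀ x : ℝ, HasDerivAt (fun x : ℝ => x ^ (m + 1) * Real.exp (-b * x ^ 2))
      ((m + 1 : ℝ) * (x ^ m * Real.exp (-b * x ^ 2))
        - (2 * b) * (x ^ (m + 2) * Real.exp (-b * x ^ 2))) x := by
    intro x
    have := (hasDerivAt_pow (m + 1) x).mul (deriv_gexp b x)
    refine this.congr_deriv ?_
    rw [Nat.add_sub_cancel]
    push_cast
    ring
  have h0 := integral_eq_zero_of_hasDerivAt_of_integrable hderiv
    (((integrable_pow_mul_gexp hb m).const_mul ((m + 1 : ℝ))).sub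
      ((integrable_pow_mul_gexp hb (m + 2)).const_mul (2 * b)))
    (integrable_pow_mul_gexp hb (m + 1))
  rw [integral_sub ((integrable_pow_mul_gexp hb m).const_mul _)
      ((integrable_pow_mul_gexp hb (m + 2)).const_mul _),
    integral_const_mul, integral_const_mul, sub_eq_zero] at h0
  have h2b : (2 * b) ≠ 0 := by positivity
  rw [div_mul_eq_mul_div, h0, mul_comm, mul_div_assoc, div_self h2b, mul_one]

lemma gauss_moment_odd {b : ℝ} (l : ℕ) :
    ∫ x : ℝ, x ^ (2 * l + 1) * Real.exp (-b * x ^ 2) = 0 := by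
  have hmp : MeasurePreserving (fun x : ℝ => -x) volume volume :=
    Measure.measurePreserving_neg volume
  have hme : MeasurableEmbedding (fun x : ℝ => -x) :=
    (Homeomorph.neg ℝ).measurableEmbedding
  have h := hmp.integral_comp hme (fun x : ℝ => x ^ (2 * l + 1) * Real.exp (-b * x ^ 2))
  have h2 : ∫ x : ℝ, (-x) ^ (2 * l + 1) * Real.exp (-b * (-x) ^ 2)
      = -∫ x : ℝ, x ^ (2 * l + 1) * Real.exp (-b * x ^ 2) := by
    rw [← integral_neg]
    congr 1
    funext x
    rw [Odd.neg_pow ⟨l, by ring⟩, neg_sq]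
    ring
  rw [h2] at h
  linarith [h]
open scoped NNReal ENNReal

section B
variable {v : ℝ≥0}

lemma pdf0_eq (v : ℝ≥0) :
    gaussianPDFReal 0 v
      = fun x => (Real.sqrt (2 * π * v))⁻¹ * Real.exp (-(2 * (v : ℝ))⁻¹ * x ^ 2) := by
  funext x
  rw [gaussianPDFReal]
  congr 1
  rw [sub_zero]
  congr 1
  by_cases hv : (v : ℝ) = 0
  · simp [hv]
  · field_simp

lemma integral_fun_gaussianReal (hv : v ≠ 0) (f : ℝ → ℝ) :
    ∫ x, f x ∂(gaussianReal 0 v) = ∫ x, gaussianPDFReal 0 v x * f x := by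
  rw [gaussianReal_of_var_ne_zero 0 hv]
  have h : (gaussianPDF 0 v) = fun x => ((gaussianPDFReal 0 v x).toNNReal : ℝ≥0∞) := rfl
  rw [h, integral_withDensity_eq_integral_smul₀
    (((measurable_gaussianPDFReal 0 v).real_toNNReal).aemeasurable) f]
  congr 1
  funext x
  rw [NNReal.smul_def, Real.coe_toNNReal _ (gaussianPDFReal_nonneg _ _ _), smul_eq_mul]

lemma integrable_fun_gaussianReal (hv : v ≠ 0) {f : ℝ → ℝ}
    (h : Integrable (fun x => gaussianPDFReal 0 v x * f x) volume) :
    Integrable f (gaussianReal 0 v) := by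
  rw [gaussianReal_of_var_ne_zero 0 hv]
  have hh : (gaussianPDF 0 v) = fun x => ((gaussianPDFReal 0 v x).toNNReal : ℝ≥0∞) := rfl
  rw [hh, integrable_withDensity_iff_integrable_smul₀
    (((measurable_gaussianPDFReal 0 v).real_toNNReal).aemeasurable)]
  apply h.congr
  filter_upwards with x
  rw [NNReal.smul_def, Real.coe_toNNReal _ (gaussianPDFReal_nonneg _ _ _), smul_eq_mul]
end B

section C
variable {v : ℝ≥0}

lemma vpos (hv : v ≠ 0) : (0:ℝ) < (v : ℝ) := by
  have : (0:ℝ≥0) < v := pos_iff_ne_zero.mpr hv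
  exact_mod_cast this

lemma hbpos (hv : v ≠ 0) : 0 < (2 * (v : ℝ))⁻¹ := by
  have := vpos hv
  positivity

lemma integral_pow_gaussianReal (hv : v ≠ 0) (n : ℕ) :
    ∫ x, x ^ n ∂(gaussianReal 0 v)
      = (Real.sqrt (2 * π * v))⁻¹ * ∫ x : ℝ, x ^ n * Real.exp (-(2 * (v : ℝ))⁻¹ * x ^ 2) := by
  rw [integral_fun_gaussianReal hv, ← integral_const_mul]
  congr 1
  funext x
  rw [pdf0_eq]
  ring

lemma integrable_pow_gaussianReal (hv : v ≠ 0) (n : ℕ) :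
    Integrable (fun x => x ^ n) (gaussianReal 0 v) := by
  apply integrable_fun_gaussianReal hv
  apply (((integrable_pow_mul_gexp (hbpos hv) n).const_mul
    ((Real.sqrt (2 * π * v))⁻¹)).congr ?_)
  filter_upwards with x
  rw [pdf0_eq]
  ring

lemma gauss_norm (hv : v ≠ 0) :
    (Real.sqrt (2 * π * v))⁻¹ * ∫ x : ℝ, x ^ 0 * Real.exp (-(2 * (v : ℝ))⁻¹ * x ^ 2) = 1 := by
  have h := integral_gaussianPDFReal_eq_one 0 hv
  rw [pdf0_eq] at h
  rw [← h, ← integral_const_mul]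
  congr 1
  funext x
  ring

lemma gaussianReal_m1 (hv : v ≠ 0) : ∫ x, x ^ 1 ∂(gaussianReal 0 v) = 0 := by
  rw [integral_pow_gaussianReal hv, (gauss_moment_odd 0 : ∫ x : ℝ, x ^ 1 * Real.exp (-(2 * (v : ℝ))⁻¹ * x ^ 2) = 0), mul_zero]

lemma gaussianReal_m3 (hv : v ≠ 0) : ∫ x, x ^ 3 ∂(gaussianReal 0 v) = 0 := by
  rw [integral_pow_gaussianReal hv, show (3:ℕ) = 2*1+1 from rfl, gauss_moment_odd, mul_zero]

lemma gaussianReal_m2 (hv : v ≠ 0) : ∫ x, x ^ 2 ∂(gaussianReal 0 v) = (v : ℝ) := by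
  have hrec := gauss_moment_rec (hbpos hv) 0
  have hnorm := gauss_norm (v := v) hv
  have h2b : ((0:ℕ) + 1 : ℝ) / (2 * (2 * (v : ℝ))⁻¹) = (v : ℝ) := by
    have := vpos hv
    field_simp
    norm_num
  rw [integral_pow_gaussianReal hv, show (2 : ℕ) = 0 + 2 from rfl, hrec, h2b,
    mul_left_comm, hnorm, mul_one]

lemma gaussianReal_m4 (hv : v ≠ 0) : ∫ x, x ^ 4 ∂(gaussianReal 0 v) = 3 * (v : ℝ) ^ 2 := by
  have hrec := gauss_moment_rec (hbpos hv) 2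
  have h2b : ((2:ℕ) + 1 : ℝ) / (2 * (2 * (v : ℝ))⁻¹) = 3 * (v : ℝ) := by
    have := vpos hv
    field_simp
    ring
  have hm2 := gaussianReal_m2 hv
  rw [integral_pow_gaussianReal hv] at hm2
  rw [integral_pow_gaussianReal hv, show (4 : ℕ) = 2 + 2 from rfl, hrec, h2b,
    mul_left_comm, hm2]
  ring

end C

section E

/-- running maximum of `|S|`. -/
noncomputable def mxs (S : ℕ → ℝ) : ℕ → ℝ
  | 0 => |S 0|
  | (n+1) => max (mxs S (n)) |S (n+1)|

lemma mxs_nonneg (S : ℕ → ℝ) (n : ℕ) : 0 ≤ mxs S n := by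
  induction n with
  | zero => exact abs_nonneg _
  | succ n ih => exact le_trans ih (le_max_left _ _)

lemma le_mxs (S : ℕ → ℝ) {m n : ℕ} (h : m ≤ n) : |S m| ≤ mxs S n := by
  induction n with
  | zero => simp_all [mxs, Nat.le_zero.mp h]
  | succ n ih =>
    rcases Nat.lt_succ_iff_lt_or_eq.mp (Nat.lt_succ_of_le h) with h' | h'
    · exact le_trans (ih (Nat.lt_succ_iff.mp h')) (le_max_left _ _)
    · rw [h']; exact le_max_right _ _

lemma mxs_congr {S S' : ℕ → ℝ} {n : ℕ} (h : ∀ m ≤ n, S m = S' m) :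
    mxs S n = mxs S' n := by
  induction n with
  | zero => simp [mxs, h 0 le_rfl]
  | succ n ih =>
    rw [mxs, mxs, ih fun m hm => h m (hm.trans n.le_succ), h (n+1) le_rfl]

lemma pathwise_doob_aux (S : ℕ → ℝ) (n : ℕ) :
    (mxs S n) ^ 2 + (mxs S n - 2 * |S n|) ^ 2
      ≤ 4 * |S n| ^ 2 - 4 * ∑ k ∈ Finset.range n, mxs S k * (|S (k+1)| - |S k|) := by
  induction n with
  | zero =>
    simp only [Finset.range_zero, Finset.sum_empty, mxs]
    nlinarith [abs_nonneg (S 0)]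
  | succ n ih =>
    rw [Finset.sum_range_succ]
    have h1 : mxs S (n+1) = max (mxs S n) |S (n+1)| := rfl
    rcases max_cases (mxs S n) |S (n+1)| with ⟨he, hle⟩ | ⟨he, hlt⟩ <;>
      rw [h1, he] <;> nlinarith [mxs_nonneg S n, abs_nonneg (S (n+1)), abs_nonneg (S n)]

lemma pathwise_doob (S : ℕ → ℝ) (n : ℕ) :
    (mxs S n) ^ 2
      ≤ 4 * (S n) ^ 2 - 4 * ∑ k ∈ Finset.range n, mxs S k * (|S (k+1)| - |S k|) := by
  have := pathwise_doob_aux S n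
  rw [← sq_abs (S n)]
  nlinarith [sq_nonneg (mxs S n - 2 * |S n|)]

end E

section Helpers
variable {Ω : Type*} [MeasurableSpace Ω] {μ : Measure Ω}

lemma integrable_mul_of_sq {f g : Ω → ℝ} (hf : AEStronglyMeasurable f μ)
    (hg : AEStronglyMeasurable g μ) (hf2 : Integrable (fun ω => f ω ^ 2) μ)
    (hg2 : Integrable (fun ω => g ω ^ 2) μ) :
    Integrable (fun ω => f ω * g ω) μ := by
  refine (hf2.add hg2).mono' (hf.mul hg) ?_
  filter_upwards with ω
  simp only [Pi.add_apply]
  rw [Real.norm_eq_abs, abs_mul]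
  nlinarith [abs_nonneg (f ω), abs_nonneg (g ω), sq_abs (f ω), sq_abs (g ω),
    sq_nonneg (|f ω| - |g ω|)]

end Helpers

section Jensen
variable {Ω : Type*} [MeasurableSpace Ω] {μ : Measure Ω} [IsProbabilityMeasure μ]

lemma jensen_step {E : Type*} [MeasurableSpace E] {W : Ω → E} {Z : Ω → ℝ}
    (hW : Measurable W) (hZ : Measurable Z) (hindep : IndepFun W Z μ)
    {F G : E → ℝ} (hF : Measurable F) (hG : Measurable G) (hF0 : ∀ y, 0 ≤ F y)
    (hZint : Integrable Z μ) (hZmean : ∫ ω, Z ω ∂μ = 0)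
    (hHint : Integrable (fun ω => F (W ω) * (|G (W ω) + Z ω| - |G (W ω)|)) μ) :
    0 ≤ ∫ ω, F (W ω) * (|G (W ω) + Z ω| - |G (W ω)|) ∂μ := by
  set ν := μ.map W with hν
  set ρ := μ.map Z with hρ
  have hνprob : IsProbabilityMeasure ν := Measure.isProbabilityMeasure_map hW.aemeasurable
  have hρprob : IsProbabilityMeasure ρ := Measure.isProbabilityMeasure_map hZ.aemeasurable
  set Φ : E × ℝ → ℝ := fun p => F p.1 * (|G p.1 + p.2| - |G p.1|) with hΦdef
  have hΦmeas : Measurable Φ := by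
    apply ((hF.comp measurable_fst).mul ?_)
    exact (((hG.comp measurable_fst).add measurable_snd).abs.sub (hG.comp measurable_fst).abs)
  have hpair : μ.map (fun ω => (W ω, Z ω)) = ν.prod ρ :=
    (indepFun_iff_map_prod_eq_prod_map_map hW.aemeasurable hZ.aemeasurable).mp hindep
  have h1 : ∫ ω, F (W ω) * (|G (W ω) + Z ω| - |G (W ω)|) ∂μ
      = ∫ p, Φ p ∂(ν.prod ρ) := by
    rw [← hpair, integral_map (hW.prodMk hZ).aemeasurable hΦmeas.aestronglyMeasurable]
  have hΦint : Integrable Φ (ν.prod ρ) := by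
    rw [← hpair]
    exact (integrable_map_measure hΦmeas.aestronglyMeasurable
      (hW.prodMk hZ).aemeasurable).mpr hHint
  have hidint : Integrable (fun z => z) ρ :=
    (integrable_map_measure aestronglyMeasurable_id hZ.aemeasurable).mpr hZint
  have hidmean : ∫ z, z ∂ρ = 0 := by
    rw [hρ]
    exact (integral_map hZ.aemeasurable measurable_id.aestronglyMeasurable).trans hZmean
  rw [h1, integral_prod _ hΦint]
  apply integral_nonneg
  intro y
  have habsint : Integrable (fun z => |G y + z|) ρ :=
    ((integrable_const (G y)).add hidint).abs
  have hinner : ∫ z, Φ (y, z) ∂ρ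
      = F y * ((∫ z, |G y + z| ∂ρ) - |G y|) := by
    simp only [hΦdef]
    rw [integral_const_mul]
    congr 1
    rw [integral_sub habsint (integrable_const _), integral_const]
    simp
  have hjensen : |G y| ≤ ∫ z, |G y + z| ∂ρ := by
    have h2 : ∫ z, G y + z ∂ρ = G y := by
      rw [integral_add (integrable_const _) hidint, integral_const, hidmean]
      simp
    calc |G y| = |∫ z, G y + z ∂ρ| := by rw [h2]
      _ ≤ ∫ z, |G y + z| ∂ρ := by
          simpa [Real.norm_eq_abs] using
            norm_integral_le_integral_norm (μ := ρ) (f := fun z => G y + z)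
  calc (0:ℝ) ≤ F y * ((∫ z, |G y + z| ∂ρ) - |G y|) :=
        mul_nonneg (hF0 y) (by linarith)
    _ = ∫ z, Φ (y, z) ∂ρ := hinner.symm

end Jensen

section D
variable {Ω : Type*} [MeasurableSpace Ω] {μ : Measure Ω} [IsProbabilityMeasure μ]

lemma moment_computation {R O : Ω → ℝ} {s ξk σok c : ℝ} (hs : 0 < s)
    (hRmeas : Measurable R) (hOmeas : Measurable O)
    (hmap : μ.map R = gaussianReal 0 ⟨s, hs.le⟩)
    (hRO : IndepFun R O μ)
    (hOmem : MemLp O 2 μ) (hOmean : ∫ ω, O ω ∂μ = ξk)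
    (hO2 : ∫ ω, O ω ^ 2 ∂μ = σok + ξk ^ 2) :
    Integrable (fun ω => c * (s - R ω * (R ω - O ω))) μ
    ∧ ∫ ω, c * (s - R ω * (R ω - O ω)) ∂μ = 0
    ∧ Integrable (fun ω => (c * (s - R ω * (R ω - O ω))) ^ 2) μ
    ∧ ∫ ω, (c * (s - R ω * (R ω - O ω))) ^ 2 ∂μ
        = c ^ 2 * (2 * s ^ 2 + s * σok + s * ξk ^ 2) := by
  have hv : (⟨s, hs.le⟩ : ℝ≥0) ≠ 0 := by
    intro h
    have h := congrArg Subtype.val h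
    exact hs.ne' h
  have hRn : ∀ n : ℕ, Integrable (fun ω => R ω ^ n) μ := by
    intro n
    have h := integrable_pow_gaussianReal hv n
    rw [← hmap] at h
    exact (integrable_map_measure (measurable_id.pow_const n).aestronglyMeasurable
      hRmeas.aemeasurable).mp h
  have hRmom : ∀ n : ℕ, ∫ ω, R ω ^ n ∂μ = ∫ x, x ^ n ∂(gaussianReal 0 ⟨s, hs.le⟩) := by
    intro n
    rw [← hmap]
    exact (integral_map hRmeas.aemeasurable
      (measurable_id.pow_const n).aestronglyMeasurable).symm
  have hR1 : ∫ ω, R ω ^ 1 ∂μ = 0 := by rw [hRmom 1, gaussianReal_m1 hv]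
  have hR2 : ∫ ω, R ω ^ 2 ∂μ = s := by rw [hRmom 2, gaussianReal_m2 hv]; rfl
  have hR3 : ∫ ω, R ω ^ 3 ∂μ = 0 := by rw [hRmom 3, gaussianReal_m3 hv]
  have hR4 : ∫ ω, R ω ^ 4 ∂μ = 3 * s ^ 2 := by rw [hRmom 4, gaussianReal_m4 hv]; rfl
  have hRint : Integrable R μ := by simpa using hRn 1
  have hR1' : ∫ ω, R ω ∂μ = 0 := by simpa using hR1
  have hOint : Integrable O μ := hOmem.integrable one_le_two
  have hO2int : Integrable (fun ω => O ω ^ 2) μ :=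
    (memLp_two_iff_integrable_sq hOmem.aestronglyMeasurable).mp hOmem
  have hROint : Integrable (fun ω => R ω * O ω) μ := hRO.integrable_mul hRint hOint
  have hROval : ∫ ω, R ω * O ω ∂μ = 0 := by
    have h2 : ∫ ω, R ω * O ω ∂μ = (∫ ω, R ω ∂μ) * ∫ ω, O ω ∂μ :=
      hRO.integral_fun_mul_eq_mul_integral hRint.1 hOint.1
    rw [h2, hR1', zero_mul]
  have hind31 : IndepFun (fun ω => R ω ^ 3) O μ :=
    hRO.comp (measurable_id.pow_const 3) measurable_id
  have hind22 : IndepFun (fun ω => R ω ^ 2) (fun ω => O ω ^ 2) μ :=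
    hRO.comp (measurable_id.pow_const 2) (measurable_id.pow_const 2)
  have hR3Oint : Integrable (fun ω => R ω ^ 3 * O ω) μ :=
    hind31.integrable_mul (hRn 3) hOint
  have hR3Oval : ∫ ω, R ω ^ 3 * O ω ∂μ = 0 := by
    have h2 : ∫ ω, R ω ^ 3 * O ω ∂μ = (∫ ω, R ω ^ 3 ∂μ) * ∫ ω, O ω ∂μ :=
      hind31.integral_fun_mul_eq_mul_integral (hRn 3).1 hOint.1
    rw [h2, hR3, zero_mul]
  have hR2O2int : Integrable (fun ω => R ω ^ 2 * O ω ^ 2) μ :=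
    hind22.integrable_mul (hRn 2) hO2int
  have hR2O2val : ∫ ω, R ω ^ 2 * O ω ^ 2 ∂μ = s * (σok + ξk ^ 2) := by
    have h2 : ∫ ω, R ω ^ 2 * O ω ^ 2 ∂μ = (∫ ω, R ω ^ 2 ∂μ) * ∫ ω, O ω ^ 2 ∂μ :=
      hind22.integral_fun_mul_eq_mul_integral (hRn 2).1 hO2int.1
    rw [h2, hR2, hO2]
  have hXeq : (fun ω => c * (s - R ω * (R ω - O ω)))
      = fun ω => c * s + -c * R ω ^ 2 + c * (R ω * O ω) := by
    funext ω; ring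
  have j1 : Integrable (fun _ : Ω => c * s) μ := integrable_const _
  have j2 : Integrable (fun ω => -c * R ω ^ 2) μ := (hRn 2).const_mul _
  have j12 : Integrable (fun ω => c * s + -c * R ω ^ 2) μ := j1.add j2
  have j3 : Integrable (fun ω => c * (R ω * O ω)) μ := hROint.const_mul _
  have hXint : Integrable (fun ω => c * (s - R ω * (R ω - O ω))) μ := by
    rw [hXeq]; exact j12.add j3
  have hXval : ∫ ω, c * (s - R ω * (R ω - O ω)) ∂μ = 0 := by
    rw [hXeq, integral_add j12 j3, integral_add j1 j2, integral_const,
      integral_const_mul, integral_const_mul, hR2, hROval]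
    simp
  have hX2eq : (fun ω => (c * (s - R ω * (R ω - O ω))) ^ 2)
      = fun ω => (c ^ 2 * s ^ 2 + c ^ 2 * R ω ^ 4 + c ^ 2 * (R ω ^ 2 * O ω ^ 2)
          + -(2 * c ^ 2 * s) * R ω ^ 2 + 2 * c ^ 2 * s * (R ω * O ω)
          + -(2 * c ^ 2) * (R ω ^ 3 * O ω)) := by
    funext ω; ring
  have i1 : Integrable (fun _ : Ω => c ^ 2 * s ^ 2) μ := integrable_const _
  have i2 : Integrable (fun ω => c ^ 2 * R ω ^ 4) μ := (hRn 4).const_mul _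
  have i3 : Integrable (fun ω => c ^ 2 * (R ω ^ 2 * O ω ^ 2)) μ := hR2O2int.const_mul _
  have i4 : Integrable (fun ω => -(2 * c ^ 2 * s) * R ω ^ 2) μ := (hRn 2).const_mul _
  have i5 : Integrable (fun ω => 2 * c ^ 2 * s * (R ω * O ω)) μ := hROint.const_mul _
  have i6 : Integrable (fun ω => -(2 * c ^ 2) * (R ω ^ 3 * O ω)) μ := hR3Oint.const_mul _
  have i12 : Integrable (fun ω => c ^ 2 * s ^ 2 + c ^ 2 * R ω ^ 4) μ := i1.add i2
  have i123 : Integrable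
      (fun ω => c ^ 2 * s ^ 2 + c ^ 2 * R ω ^ 4 + c ^ 2 * (R ω ^ 2 * O ω ^ 2)) μ := i12.add i3
  have i1234 : Integrable
      (fun ω => c ^ 2 * s ^ 2 + c ^ 2 * R ω ^ 4 + c ^ 2 * (R ω ^ 2 * O ω ^ 2)
        + -(2 * c ^ 2 * s) * R ω ^ 2) μ := i123.add i4
  have i12345 : Integrable
      (fun ω => c ^ 2 * s ^ 2 + c ^ 2 * R ω ^ 4 + c ^ 2 * (R ω ^ 2 * O ω ^ 2)
        + -(2 * c ^ 2 * s) * R ω ^ 2 + 2 * c ^ 2 * s * (R ω * O ω)) μ := i1234.add i5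
  refine ⟨hXint, hXval, ?_, ?_⟩
  · rw [hX2eq]; exact i12345.add i6
  · rw [hX2eq, integral_add i12345 i6, integral_add i1234 i5, integral_add i123 i4,
      integral_add i12 i3, integral_add i1 i2,
      integral_const, integral_const_mul, integral_const_mul, integral_const_mul,
      integral_const_mul, integral_const_mul,
      hR4, hR2O2val, hR2, hROval, hR3Oval]
    simp only [measure_univ, probReal_univ, ENNReal.toReal_one, smul_eq_mul, one_mul]
    ring
end D

noncomputable def psK (K : ℕ) (m : ℕ) (y : Fin K → ℝ) : ℝ :=
  ∑ i ∈ Finset.range m, if h : i < K then y ⟨i, h⟩ else 0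

noncomputable def mxK (K : ℕ) (n : ℕ) (y : Fin K → ℝ) : ℝ := mxs (fun m => psK K m y) n

lemma psK_meas {K : ℕ} (m : ℕ) : Measurable (psK K m) := by
  apply Finset.measurable_sum
  intro i _
  by_cases h : i < K
  · simpa [h] using measurable_pi_apply (⟨i, h⟩ : Fin K)
  · simp [h]

lemma mxK_meas {K : ℕ} (n : ℕ) : Measurable (mxK K n) := by
  induction n with
  | zero => exact (psK_meas 0).abs
  | succ n ih => exact ih.max (psK_meas (n+1)).abs

/-- **Maximal inequality for the partial sums `M_j`.**
For `M_j = ∑_{k=1}^j d_k (σ_rk² − (τ̂_rk − τ_k)(τ̂_rk − τ̂_ok))` (here indexed by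
`j : Fin K`, with `M j` the sum of the first `j+1` terms),
`E[max_{1 ≤ j ≤ K} M_j²] ≤ 4 ∑_k d_k² (σ_rk² ξ_k² + σ_rk² σ_ok² + 2 σ_rk⁴)`. -/
theorem martingale_partial_sum_maximal_inequality
{Ω : Type*} [MeasurableSpace Ω] (μ : Measure Ω) [IsProbabilityMeasure μ]
    (K : ℕ) (hK : 1 ≤ K)
    (d σr σo ξ τv : Fin K → ℝ)
    (hd : ∀ k, 0 < d k) (hσr : ∀ k, 0 < σr k)
    (τr τo : Ω → Fin K → ℝ)
    (hτr_meas : ∀ k, Measurable fun ω => τr ω k)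
    (hτo_meas : ∀ k, Measurable fun ω => τo ω k)
    (hτr_gauss : ∀ k, μ.map (fun ω => τr ω k)
        = gaussianReal (τv k) ⟨σr k ^ 2, sq_nonneg _⟩)
    (hτr_indep : iIndepFun (fun k ω => τr ω k) μ)
    (hτo_indep : iIndepFun (fun k ω => τo ω k) μ)
    (hro_indep : IndepFun (fun ω => τr ω) (fun ω => τo ω) μ)
    (hpairs_indep : iIndepFun
        (fun k ω => (τr ω k, τo ω k)) μ)
    (hτo_mem : ∀ k, MemLp (fun ω => τo ω k) 2 μ)
    (hτo_mean : ∀ k, ∫ ω, τo ω k ∂μ = τv k + ξ k)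
    (hτo_var : ∀ k, variance (fun ω => τo ω k) μ = σo k ^ 2) :
    ∫ ω, (⨆ j : Fin K,
        (∑ k ∈ Finset.univ.filter (fun k : Fin K => k ≤ j),
            d k * (σr k ^ 2 - (τr ω k - τv k) * (τr ω k - τo ω k))) ^ 2) ∂μ
      ≤ 4 * ∑ k, (d k) ^ 2
          * (σr k ^ 2 * ξ k ^ 2 + σr k ^ 2 * σo k ^ 2 + 2 * σr k ^ 4) := by
  classical
  -- the increments
  set Xf : Fin K → Ω → ℝ :=
    fun k ω => d k * (σr k ^ 2 - (τr ω k - τv k) * (τr ω k - τo ω k)) with hXf_def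
  have hXfmeas : ∀ k, Measurable (Xf k) := by
    intro k
    apply Measurable.const_mul
    exact (measurable_const.sub (((hτr_meas k).sub measurable_const).mul
      ((hτr_meas k).sub (hτo_meas k))))
  -- basic per-increment facts
  have key : ∀ k : Fin K, Integrable (Xf k) μ ∧ ∫ ω, Xf k ω ∂μ = 0
      ∧ Integrable (fun ω => (Xf k ω) ^ 2) μ
      ∧ ∫ ω, (Xf k ω) ^ 2 ∂μ
          = (d k) ^ 2 * (2 * (σr k ^ 2) ^ 2 + σr k ^ 2 * σo k ^ 2 + σr k ^ 2 * ξ k ^ 2) := by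
    intro k
    have hσ := hσr k
    have hs : (0:ℝ) < σr k ^ 2 := by positivity
    have hRmeas : Measurable (fun ω => τr ω k - τv k) := (hτr_meas k).sub measurable_const
    have hOmeas : Measurable (fun ω => τo ω k - τv k) := (hτo_meas k).sub measurable_const
    have hmap : μ.map (fun ω => τr ω k - τv k) = gaussianReal 0 ⟨σr k ^ 2, hs.le⟩ := by
      have h2 : (fun ω => τr ω k - τv k)
          = (fun x => x + -(τv k)) ∘ (fun ω => τr ω k) := by
        funext ω; simp [sub_eq_add_neg]
      rw [h2, ← Measure.map_map (show Measurable fun x : ℝ => x + -(τv k) by fun_prop) (hτr_meas k), hτr_gauss k]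
      erw [gaussianReal_map_add_const]
      norm_num
    have hRO : IndepFun (fun ω => τr ω k - τv k) (fun ω => τo ω k - τv k) μ := by
      have := hro_indep.comp (φ := fun y : Fin K → ℝ => y k - τv k)
        (ψ := fun y : Fin K → ℝ => y k - τv k)
        (by fun_prop)
        (by fun_prop)
      exact this
    have hOmem : MemLp (fun ω => τo ω k - τv k) 2 μ := (hτo_mem k).sub (memLp_const _)
    have hτoint : Integrable (fun ω => τo ω k) μ := (hτo_mem k).integrable one_le_two
    have hOmean : ∫ ω, τo ω k - τv k ∂μ = ξ k := by
      rw [integral_sub hτoint (integrable_const _), hτo_mean k, integral_const]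
      simp
    have hτo2int : Integrable (fun ω => (τo ω k) ^ 2) μ :=
      (memLp_two_iff_integrable_sq (hτo_mem k).aestronglyMeasurable).mp (hτo_mem k)
    have hτo2val : ∫ ω, (τo ω k) ^ 2 ∂μ = σo k ^ 2 + (τv k + ξ k) ^ 2 := by
      have h3 : variance (fun ω => τo ω k) μ
          = (∫ ω, (τo ω k) ^ 2 ∂μ) - (∫ ω, τo ω k ∂μ) ^ 2 := variance_eq_sub (hτo_mem k)
      rw [hτo_var k, hτo_mean k] at h3
      linarith
    have hO2 : ∫ ω, (τo ω k - τv k) ^ 2 ∂μ = σo k ^ 2 + ξ k ^ 2 := by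
      have hexp : (fun ω => (τo ω k - τv k) ^ 2)
          = fun ω => (τo ω k) ^ 2 + (-(2 * τv k)) * τo ω k + τv k ^ 2 := by
        funext ω; ring
      have e1 : Integrable (fun ω => (τo ω k) ^ 2 + (-(2 * τv k)) * τo ω k) μ :=
        hτo2int.add (hτoint.const_mul _)
      rw [hexp, integral_add e1 (integrable_const _),
        integral_add hτo2int (hτoint.const_mul _), integral_const_mul, integral_const,
        hτo2val, hτo_mean k]
      simp only [measure_univ, probReal_univ, ENNReal.toReal_one, smul_eq_mul, one_mul]
      ring
    have h := moment_computation (c := d k) hs hRmeas hOmeas hmap hRO hOmem hOmean hO2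
    have hXeq : Xf k = fun ω =>
        d k * (σr k ^ 2 - (τr ω k - τv k) * ((τr ω k - τv k) - (τo ω k - τv k))) := by
      funext ω; rw [hXf_def]; ring
    refine ⟨?_, ?_, ?_, ?_⟩
    · rw [hXeq]; exact h.1
    · rw [show (fun ω => Xf k ω) = Xf k from rfl] at *
      rw [hXeq]; exact h.2.1
    · rw [hXeq]; exact h.2.2.1
    · rw [hXeq]; exact h.2.2.2
  have hXfmem : ∀ k, MemLp (Xf k) 2 μ := fun k =>
    (memLp_two_iff_integrable_sq (hXfmeas k).aestronglyMeasurable).mpr (key k).2.2.1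
  have hXfindep : iIndepFun Xf μ := by
    have := hpairs_indep.comp
      (fun k (p : ℝ × ℝ) => d k * (σr k ^ 2 - (p.1 - τv k) * (p.1 - p.2)))
      (fun k => (measurable_const.sub ((measurable_fst.sub measurable_const).mul
        (measurable_fst.sub measurable_snd))).const_mul _)
    exact this
  -- vector of increments
  set Xv : Ω → Fin K → ℝ := fun ω i => Xf i ω with hXv_def
  -- membership facts for partial sums and running maxima
  have hMs_mem : ∀ m : ℕ, MemLp (fun ω => psK K m (Xv ω)) 2 μ := by
    intro m
    have := memLp_finset_sum (μ := μ) (Finset.range m)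
      (f := fun i ω => if h : i < K then Xf ⟨i, h⟩ ω else 0)
      (fun i _ => by
        by_cases h : i < K
        · simpa [h] using hXfmem ⟨i, h⟩
        · simpa [h] using MemLp.zero)
    exact this
  have hRk_mem : ∀ n : ℕ, MemLp (fun ω => mxK K n (Xv ω)) 2 μ := by
    intro n
    induction n with
    | zero => exact (hMs_mem 0).abs
    | succ n ih => exact ih.sup ((hMs_mem (n+1)).abs)
  have hMs_meas : ∀ m : ℕ, Measurable (fun ω => psK K m (Xv ω)) := by
    intro m
    apply (psK_meas m).comp
    exact measurable_pi_lambda _ fun i => hXfmeas i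
  have hRk_meas : ∀ n : ℕ, Measurable (fun ω => mxK K n (Xv ω)) := by
    intro n
    apply (mxK_meas n).comp
    exact measurable_pi_lambda _ fun i => hXfmeas i
  have hMsSq_int : ∀ m : ℕ, Integrable (fun ω => (psK K m (Xv ω)) ^ 2) μ := fun m =>
    (memLp_two_iff_integrable_sq (hMs_mem m).aestronglyMeasurable).mp (hMs_mem m)
  -- the summand terms
  have hT_int : ∀ n : ℕ, Integrable
      (fun ω => mxK K n (Xv ω) * (|psK K (n+1) (Xv ω)| - |psK K n (Xv ω)|)) μ := by
    intro n
    have hmem : MemLp (fun ω => |psK K (n+1) (Xv ω)| - |psK K n (Xv ω)|) 2 μ :=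
      (hMs_mem (n+1)).abs.sub (hMs_mem n).abs
    exact integrable_mul_of_sq (hRk_mem n).aestronglyMeasurable hmem.aestronglyMeasurable
      ((memLp_two_iff_integrable_sq (hRk_mem n).aestronglyMeasurable).mp (hRk_mem n))
      ((memLp_two_iff_integrable_sq hmem.aestronglyMeasurable).mp hmem)
  -- rewrite of the statement's partial sums
  have hsum_eq : ∀ (j : Fin K) (ω : Ω),
      (∑ k ∈ Finset.univ.filter (fun k : Fin K => k ≤ j),
          d k * (σr k ^ 2 - (τr ω k - τv k) * (τr ω k - τo ω k)))
        = psK K (j.1 + 1) (Xv ω) := by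
    intro j ω
    rw [Finset.sum_filter]
    have hr : Finset.range (j.1 + 1) = (Finset.range K).filter (· ≤ j.1) := by
      ext i
      simp only [Finset.mem_range, Finset.mem_filter]
      have := j.isLt
      omega
    have h1 : psK K (j.1 + 1) (Xv ω)
        = ∑ i ∈ Finset.range K,
            (if i ≤ j.1 then (if h : i < K then Xf ⟨i, h⟩ ω else 0) else 0) := by
      show (∑ i ∈ Finset.range (j.1+1), if h : i < K then Xv ω ⟨i, h⟩ else 0) = _
      rw [hr, Finset.sum_filter]
    rw [h1, ← Fin.sum_univ_eq_sum_range
      (fun i => if i ≤ j.1 then (if h : i < K then Xf ⟨i, h⟩ ω else 0) else 0) K]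
    apply Finset.sum_congr rfl
    intro k _
    by_cases h : k ≤ j
    · rw [if_pos h, if_pos (show (k : ℕ) ≤ j.1 from h), dif_pos k.isLt]
    · rw [if_neg h, if_neg (show ¬ ((k : ℕ) ≤ j.1) from h)]
  -- ∫ (M_K)² equals the sum of the second moments
  have hMsK_eq : ∀ ω, psK K K (Xv ω) = ∑ k : Fin K, Xf k ω := by
    intro ω
    show (∑ i ∈ Finset.range K, if h : i < K then Xv ω ⟨i, h⟩ else 0) = _
    rw [← Fin.sum_univ_eq_sum_range (fun i => if h : i < K then Xv ω ⟨i, h⟩ else 0) K]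
    apply Finset.sum_congr rfl
    intro i _
    rw [dif_pos i.isLt]
  have hzero : ∫ ω, (∑ i : Fin K, Xf i) ω ∂μ = 0 := by
    have h1 : ∫ ω, (∑ i : Fin K, Xf i) ω ∂μ = ∫ ω, ∑ i : Fin K, Xf i ω ∂μ := by
      simp only [Finset.sum_apply]
    rw [h1, integral_finset_sum _ (fun i _ => (key i).1)]
    exact Finset.sum_eq_zero fun i _ => (key i).2.1
  have hvar : ∫ ω, (psK K K (Xv ω)) ^ 2 ∂μ = ∑ k : Fin K, ∫ ω, (Xf k ω) ^ 2 ∂μ := by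
    have hpair : Set.Pairwise ↑(Finset.univ : Finset (Fin K))
        (fun i j => IndepFun (Xf i) (Xf j) μ) := fun i _ j _ hij => hXfindep.indepFun hij
    have hmem : ∀ i ∈ (Finset.univ : Finset (Fin K)), MemLp (Xf i) 2 μ := fun i _ => hXfmem i
    have hv := IndepFun.variance_sum (μ := μ) hmem hpair
    have hsum_mem : MemLp (∑ i : Fin K, Xf i) 2 μ := memLp_finset_sum' _ hmem
    have hvd : variance (∑ i : Fin K, Xf i) μ
        = (∫ ω, ((∑ i : Fin K, Xf i) ω) ^ 2 ∂μ) - (∫ ω, (∑ i : Fin K, Xf i) ω ∂μ) ^ 2 :=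
      variance_eq_sub hsum_mem
    have e1 : ∫ ω, (psK K K (Xv ω)) ^ 2 ∂μ = ∫ ω, ((∑ i : Fin K, Xf i) ω) ^ 2 ∂μ := by
      apply integral_congr_ae
      filter_upwards with ω
      rw [hMsK_eq ω, Finset.sum_apply]
    have e4 : ∀ k : Fin K, variance (Xf k) μ = ∫ ω, (Xf k ω) ^ 2 ∂μ := by
      intro k
      have h5 : variance (Xf k) μ
          = (∫ ω, (Xf k ω) ^ 2 ∂μ) - (∫ ω, Xf k ω ∂μ) ^ 2 := variance_eq_sub (hXfmem k)
      rw [h5, (key k).2.1]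
      ring
    rw [e1, ← sub_zero (∫ ω, ((∑ i : Fin K, Xf i) ω) ^ 2 ∂μ)]
    calc (∫ ω, ((∑ i : Fin K, Xf i) ω) ^ 2 ∂μ) - 0
        = (∫ ω, ((∑ i : Fin K, Xf i) ω) ^ 2 ∂μ)
            - (∫ ω, (∑ i : Fin K, Xf i) ω ∂μ) ^ 2 := by rw [hzero]; ring
      _ = variance (∑ i : Fin K, Xf i) μ := hvd.symm
      _ = ∑ k : Fin K, variance (Xf k) μ := hv
      _ = ∑ k : Fin K, ∫ ω, (Xf k ω) ^ 2 ∂μ := Finset.sum_congr rfl fun k _ => e4 k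
  -- nonnegativity of the compensator terms
  have hT_nonneg : ∀ n, (hn : n < K) → 0 ≤ ∫ ω,
      mxK K n (Xv ω) * (|psK K (n+1) (Xv ω)| - |psK K n (Xv ω)|) ∂μ := by
    intro n hn
    set W : Ω → Fin K → ℝ := fun ω i => if (i : Fin K).1 < n then Xf i ω else 0 with hW_def
    have hWmeas : Measurable W := by
      apply measurable_pi_lambda
      intro i
      by_cases h : (i : Fin K).1 < n
      · simpa [hW_def, h] using hXfmeas i
      · simp [hW_def, h]
    set S : Finset (Fin K) := Finset.univ.filter (fun i : Fin K => i.1 < n) with hS_def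
    have hST : Disjoint S ({⟨n, hn⟩} : Finset (Fin K)) := by
      rw [Finset.disjoint_left]
      intro i hi hi'
      rw [Finset.mem_singleton] at hi'
      rw [hS_def, Finset.mem_filter] at hi
      rw [hi'] at hi
      exact lt_irrefl n hi.2
    have base := hXfindep.indepFun_finset S ({⟨n, hn⟩} : Finset (Fin K)) hST hXfmeas
    have hindep : IndepFun W (Xf ⟨n, hn⟩) μ := by
      have hφ : Measurable (fun (y : {x // x ∈ S} → ℝ) (i : Fin K) =>
          if h : i ∈ S then y ⟨i, h⟩ else 0) := by
        apply measurable_pi_lambda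
        intro i
        by_cases h : i ∈ S
        · simpa [h] using measurable_pi_apply (⟨i, h⟩ : {x // x ∈ S})
        · simp [h]
      have hψ : Measurable (fun (y : {x // x ∈ ({⟨n, hn⟩} : Finset (Fin K))} → ℝ) =>
          y ⟨⟨n, hn⟩, Finset.mem_singleton_self _⟩) := measurable_pi_apply _
      have hcomp := base.comp hφ hψ
      have hWeq : (fun (y : {x // x ∈ S} → ℝ) (i : Fin K) =>
          if h : i ∈ S then y ⟨i, h⟩ else 0) ∘ (fun a (i : {x // x ∈ S}) => Xf i a) = W := by
        funext a
        funext i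
        simp only [Function.comp_apply]
        by_cases h : i ∈ S
        · have h' : i.1 < n := by
            rw [hS_def, Finset.mem_filter] at h
            exact h.2
          simp [hW_def, h, h']
        · have h' : ¬ i.1 < n := by
            rw [hS_def, Finset.mem_filter] at h
            simpa using h
          simp [hW_def, h, h']
      rw [hWeq] at hcomp
      exact hcomp
    have hTeq : (fun ω => mxK K n (Xv ω) * (|psK K (n+1) (Xv ω)| - |psK K n (Xv ω)|))
        = fun ω => mxK K n (W ω)
            * (|psK K n (W ω) + Xf ⟨n, hn⟩ ω| - |psK K n (W ω)|) := by
      funext ω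
      have hps : ∀ m ≤ n, psK K m (W ω) = psK K m (Xv ω) := by
        intro m hm
        apply Finset.sum_congr rfl
        intro i hi
        have hi' : i < n := lt_of_lt_of_le (Finset.mem_range.mp hi) hm
        by_cases h : i < K
        · rw [dif_pos h, dif_pos h]
          show (if (⟨i, h⟩ : Fin K).1 < n then Xf ⟨i, h⟩ ω else 0) = Xv ω ⟨i, h⟩
          rw [if_pos hi']
        · rw [dif_neg h, dif_neg h]
      have hmx : mxK K n (W ω) = mxK K n (Xv ω) :=
        mxs_congr fun m hm => hps m hm
      have hsucc : psK K n (W ω) + Xf ⟨n, hn⟩ ω = psK K (n+1) (Xv ω) := by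
        rw [hps n le_rfl]
        have h6 : psK K (n+1) (Xv ω)
            = psK K n (Xv ω) + (if h : n < K then Xf ⟨n, h⟩ ω else 0) :=
          Finset.sum_range_succ _ _
        rw [h6, dif_pos hn]
      rw [hmx, hsucc, hps n le_rfl]
    rw [hTeq]
    exact jensen_step hWmeas (hXfmeas ⟨n, hn⟩) hindep (mxK_meas n) (psK_meas n)
      (fun y => mxs_nonneg _ n) (key ⟨n, hn⟩).1 (key ⟨n, hn⟩).2.1
      (by rw [← hTeq]; exact hT_int n)
  -- the dominating function
  set g : Ω → ℝ := fun ω => 4 * (psK K K (Xv ω)) ^ 2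
      - 4 * ∑ n ∈ Finset.range K,
          mxK K n (Xv ω) * (|psK K (n+1) (Xv ω)| - |psK K n (Xv ω)|) with hg_def
  have hsum_int : Integrable (fun ω => ∑ n ∈ Finset.range K,
      mxK K n (Xv ω) * (|psK K (n+1) (Xv ω)| - |psK K n (Xv ω)|)) μ :=
    integrable_finset_sum _ (fun n _ => hT_int n)
  have hg_int : Integrable g μ := by
    rw [hg_def]
    exact (((hMsSq_int K).const_mul 4)).sub (hsum_int.const_mul 4)
  have hpoint : ∀ ω, (⨆ j : Fin K,
      (∑ k ∈ Finset.univ.filter (fun k : Fin K => k ≤ j),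
          d k * (σr k ^ 2 - (τr ω k - τv k) * (τr ω k - τo ω k))) ^ 2) ≤ g ω := by
    intro ω
    have hb : (mxK K K (Xv ω)) ^ 2 ≤ g ω := pathwise_doob (fun m => psK K m (Xv ω)) K
    apply Real.iSup_le
    · intro j
      rw [hsum_eq j ω]
      calc (psK K (j.1 + 1) (Xv ω)) ^ 2 = |psK K (j.1 + 1) (Xv ω)| ^ 2 := (sq_abs _).symm
        _ ≤ (mxK K K (Xv ω)) ^ 2 :=
            pow_le_pow_left₀ (abs_nonneg _) (le_mxs (fun m => psK K m (Xv ω)) j.isLt) 2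
        _ ≤ g ω := hb
    · exact le_trans (sq_nonneg _) hb
  have hmain : ∫ ω, (⨆ j : Fin K,
      (∑ k ∈ Finset.univ.filter (fun k : Fin K => k ≤ j),
          d k * (σr k ^ 2 - (τr ω k - τv k) * (τr ω k - τo ω k))) ^ 2) ∂μ
      ≤ ∫ ω, g ω ∂μ := by
    apply integral_mono_of_nonneg
    · filter_upwards with ω
      exact Real.iSup_nonneg fun j => sq_nonneg _
    · exact hg_int
    · filter_upwards with ω
      exact hpoint ω
  have hgval : ∫ ω, g ω ∂μ = 4 * (∫ ω, (psK K K (Xv ω)) ^ 2 ∂μ)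
      - 4 * ∑ n ∈ Finset.range K, ∫ ω,
          mxK K n (Xv ω) * (|psK K (n+1) (Xv ω)| - |psK K n (Xv ω)|) ∂μ := by
    rw [hg_def]
    rw [integral_sub ((hMsSq_int K).const_mul 4) (hsum_int.const_mul 4),
      integral_const_mul, integral_const_mul, integral_finset_sum _ (fun n _ => hT_int n)]
  have hsum_nonneg : 0 ≤ ∑ n ∈ Finset.range K, ∫ ω,
      mxK K n (Xv ω) * (|psK K (n+1) (Xv ω)| - |psK K n (Xv ω)|) ∂μ :=
    Finset.sum_nonneg fun n hn => hT_nonneg n (Finset.mem_range.mp hn)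
  calc ∫ ω, (⨆ j : Fin K,
      (∑ k ∈ Finset.univ.filter (fun k : Fin K => k ≤ j),
          d k * (σr k ^ 2 - (τr ω k - τv k) * (τr ω k - τo ω k))) ^ 2) ∂μ
      ≤ ∫ ω, g ω ∂μ := hmain
    _ ≤ 4 * (∫ ω, (psK K K (Xv ω)) ^ 2 ∂μ) := by rw [hgval]; linarith
    _ = 4 * ∑ k : Fin K, ∫ ω, (Xf k ω) ^ 2 ∂μ := by rw [hvar]
    _ = 4 * ∑ k, (d k) ^ 2
          * (σr k ^ 2 * ξ k ^ 2 + σr k ^ 2 * σo k ^ 2 + 2 * σr k ^ 4) := by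
        congr 1
        apply Finset.sum_congr rfl
        intro k _
        rw [(key k).2.2.2]
        ring
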